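/- Let A be a complete set and q(z̄) ∈ S(A) a complete type over A containing the formula P(z̄) (i.e. asserting that z̄ lies in P). Then q is equivalent to a type over A ∩ P^𝒞. -/
import Mathlib


open FirstOrder Set Cardinal

universe u

namespace OverP

/-- `inP P m` says that the element `m` satisfies the monadic predicate `P`. -/
def inP {L : FirstOrder.Language.{u, u}} {M : Type u} [L.Structure M]
    (P : L.Relations 1) (m : M) : Prop :=
  FirstOrder.Language.Structure.RelMap P ![m]

/-- The set of realizations of the monadic predicate `P` in the monster model. -/
def Pset {L : FirstOrder.Language.{u, u}} {M : Type u} [L.Structure M]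
    (P : L.Relations 1) : Set M :=
  {m : M | inP P m}

/-- The cardinal `|T|` of the theory, i.e. `max ℵ₀ |L|`. -/
noncomputable def cardT (L : FirstOrder.Language.{u, u}) : Cardinal.{u} := max ℵ₀ L.card

/-- An instance of a formula with `n` free variables and parameters from the monster model. -/
structure Inst (L : FirstOrder.Language.{u, u}) (M : Type u) (n : ℕ) : Type u where
  k : ℕ
  φ : L.Formula (Fin n ⊕ Fin k)
  par : Fin k → M

/-- The tuple `c` realizes the formula instance `ι`. -/
def Inst.RealizedBy {L : FirstOrder.Language.{u, u}} {M : Type u} [L.Structure M] {n : ℕ}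
    (ι : Inst L M n) (c : Fin n → M) : Prop :=
  ι.φ.Realize (Sum.elim c ι.par)

/-- All parameters of the instance `ι` lie in the set `A`. -/
def Inst.overSet {L : FirstOrder.Language.{u, u}} {M : Type u} {n : ℕ}
    (ι : Inst L M n) (A : Set M) : Prop :=
  ∀ i, ι.par i ∈ A

/-- The complete type of the tuple `c` over the set `A` (as the set of all formula
instances over `A` realized by `c`). -/
def typeOver {L : FirstOrder.Language.{u, u}} {M : Type u} [L.Structure M]
    (A : Set M) {n : ℕ} (c : Fin n → M) : Set (Inst L M n) :=
  {ι | ι.overSet A ∧ ι.RealizedBy c}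

/-- `A` is a complete set: if `𝒞 ⊨ (∃ x̄ ⊆ P) ψ(x̄, b̄)` for parameters `b̄ ⊆ A`, then
witnesses can be found inside `P ∩ A`. -/
def IsComplete {L : FirstOrder.Language.{u, u}} {M : Type u} [L.Structure M]
    (P : L.Relations 1) (A : Set M) : Prop :=
  ∀ (n k : ℕ) (ψ : L.Formula (Fin n ⊕ Fin k)) (b : Fin k → M), (∀ i, b i ∈ A) →
    (∃ x : Fin n → M, (∀ i, inP P (x i)) ∧ ψ.Realize (Sum.elim x b)) →
    ∃ a : Fin n → M, (∀ i, a i ∈ A ∧ inP P (a i)) ∧ ψ.Realize (Sum.elim a b)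

/-- `StarFam P A c` says that the type `tp(c̄/A)` belongs to `S_*(A)`, witnessed by the
realization `c̄` itself:  `P ∩ (A ∪ c̄) = P ∩ A` and `A ∪ c̄` is complete. -/
def StarFam {L : FirstOrder.Language.{u, u}} {M : Type u} [L.Structure M]
    (P : L.Relations 1) (A : Set M) {ι : Type*} (c : ι → M) : Prop :=
  (∀ i, inP P (c i) → c i ∈ A) ∧ IsComplete P (A ∪ Set.range c)

/-- `S_*(A)`: the set of complete types over `A` in `n` variables, orthogonal to `P`. -/
def SStar {L : FirstOrder.Language.{u, u}} {M : Type u} [L.Structure M]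
    (P : L.Relations 1) (A : Set M) (n : ℕ) : Set (Set (Inst L M n)) :=
  {p | ∃ c : Fin n → M, StarFam P A c ∧ p = typeOver A c}

/-- The cardinality `|S_*(A)|` (summed over all finite tuple lengths). -/
def cardSStar {L : FirstOrder.Language.{u, u}} {M : Type u} [L.Structure M]
    (P : L.Relations 1) (A : Set M) : Cardinal.{u} :=
  #(Σ n : ℕ, SStar P A n)

/-- `A ≡ B`: the sets `A` and `B` realize the same theory with parameters, i.e. there is
an elementary bijection between them. -/
def ElemEquiv (L : FirstOrder.Language.{u, u}) {M : Type u} [L.Structure M]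
    (A B : Set M) : Prop :=
  ∃ f : A → B, Function.Bijective f ∧
    ∀ (n : ℕ) (φ : L.Formula (Fin n)) (a : Fin n → A),
      φ.Realize (fun i => (a i : M)) ↔ φ.Realize (fun i => (f (a i) : M))

/-- A complete set `A` is stable if `|S_*(A')| ≤ |A'| ^ |T|` for every `A' ≡ A`. -/
def IsStableSet {L : FirstOrder.Language.{u, u}} {M : Type u} [L.Structure M]
    (P : L.Relations 1) (A : Set M) : Prop :=
  IsComplete P A ∧ ∀ B : Set M, ElemEquiv L A B → cardSStar P B ≤ #B ^ cardT L

/-- `A` is `λ`-compact: every partial type over `A` of size `< λ` (consistent, i.e.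
realized in the monster model) is realized in `A`. -/
def IsCompactIn (L : FirstOrder.Language.{u, u}) {M : Type u} [L.Structure M]
    (A : Set M) (lam : Cardinal.{u}) : Prop :=
  ∀ (n : ℕ) (p : Set (Inst L M n)), #p < lam → (∀ ι ∈ p, ι.overSet A) →
    (∃ c : Fin n → M, ∀ ι ∈ p, ι.RealizedBy c) →
    ∃ a : Fin n → M, (∀ i, a i ∈ A) ∧ ∀ ι ∈ p, ι.RealizedBy a

/-- A set is saturated when it is `|A|`-compact. -/
def IsSaturatedSet (L : FirstOrder.Language.{u, u}) {M : Type u} [L.Structure M]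
    (A : Set M) : Prop :=
  IsCompactIn L A #A

/-- The structure induced on a subset of `M` (the language is relational). -/
def setStructure (L : FirstOrder.Language.{u, u}) {M : Type u} [L.Structure M]
    [L.IsRelational] (B : Set M) : L.Structure B where
  funMap := fun f _ => isEmptyElim f
  RelMap := fun r x => FirstOrder.Language.Structure.RelMap r (fun i => (x i : M))

/-- Satisfaction of a formula in the induced structure on a subset `B ⊆ M`. -/
def RealizeIn {L : FirstOrder.Language.{u, u}} {M : Type u} [L.Structure M]
    [L.IsRelational] (B : Set M) {α : Type} (φ : L.Formula α) (v : α → B) : Prop :=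
  letI := setStructure L B
  φ.Realize v

/-- Hypothesis 1: (1) every relation on `P^𝒞` definable in `𝒞` is definable (without
parameters) in `𝒞 | P^𝒞`; (2) every type over `P^𝒞` is definable. -/
def Hyp1 {L : FirstOrder.Language.{u, u}} {M : Type u} [L.Structure M]
    [L.IsRelational] (P : L.Relations 1) : Prop :=
  (∀ (n k : ℕ) (ψ : L.Formula (Fin n ⊕ Fin k)) (b : Fin k → M),
    ∃ θ : L.Formula (Fin n), ∀ a : Fin n → (Pset P : Set M),
      ψ.Realize (Sum.elim (fun i => (a i : M)) b) ↔ RealizeIn (Pset P : Set M) θ a) ∧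
  (∀ (n : ℕ) (c : Fin n → M) (k : ℕ) (ψ : L.Formula (Fin n ⊕ Fin k)),
    ∃ (l : ℕ) (θ : L.Formula (Fin k ⊕ Fin l)) (e : Fin l → M),
      (∀ i, inP P (e i)) ∧
      ∀ b : Fin k → M, (∀ i, inP P (b i)) →
        (ψ.Realize (Sum.elim c b) ↔ θ.Realize (Sum.elim b e)))

/-- The theory has quantifier elimination: every formula is equivalent to an atomic one. -/
def HypQE (L : FirstOrder.Language.{u, u}) (M : Type u) [L.Structure M] : Prop :=
  ∀ (n : ℕ) (φ : L.Formula (Fin n)), ∃ θ : L.Formula (Fin n),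
    FirstOrder.Language.BoundedFormula.IsAtomic θ ∧ ∀ v : Fin n → M, φ.Realize v ↔ θ.Realize v

/-- Hypothesis 2: every model of `T` (elementary submodel of the monster) is a stable set. -/
def Hyp2 {L : FirstOrder.Language.{u, u}} {M : Type u} [L.Structure M]
    (P : L.Relations 1) : Prop :=
  ∀ S : L.ElementarySubstructure M, IsStableSet P (S : Set M)

/-- The set-theoretic assumption: there are arbitrarily large `λ` with `λ^{<λ} = λ`. -/
def HypST : Prop :=
  ∀ κ : Cardinal.{u}, ∃ lam : Cardinal.{u}, κ ≤ lam ∧ lam ^< lam = lam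

/-- `A ⊆_t B`: every formula with parameters in `A` realized by a tuple from `B` is
realized by a tuple from `A` (a Tarski–Vaught style condition). -/
def SubT (L : FirstOrder.Language.{u, u}) {M : Type u} [L.Structure M]
    (A B : Set M) : Prop :=
  ∀ (n k : ℕ) (ψ : L.Formula (Fin n ⊕ Fin k)) (a : Fin k → M) (b : Fin n → M),
    (∀ i, a i ∈ A) → (∀ i, b i ∈ B) → ψ.Realize (Sum.elim b a) →
    ∃ b' : Fin n → M, (∀ i, b' i ∈ A) ∧ ψ.Realize (Sum.elim b' a)

/-- `(Θ, e)` defines the `ψ`-type of `c̄` over `D`. -/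
def Defines {L : FirstOrder.Language.{u, u}} {M : Type u} [L.Structure M] {n k l : ℕ}
    (ψ : L.Formula (Fin n ⊕ Fin k)) (Θ : L.Formula (Fin k ⊕ Fin l))
    (e : Fin l → M) (c : Fin n → M) (D : Set M) : Prop :=
  ∀ a : Fin k → M, (∀ i, a i ∈ D) →
    (ψ.Realize (Sum.elim c a) ↔ Θ.Realize (Sum.elim a e))

/-- `tp(c'/B)` is a stationarization of `tp(c/A)`: for every `ψ` some definition over `A`
defines both `ψ`-types. -/
def IsStationarization {L : FirstOrder.Language.{u, u}} {M : Type u} [L.Structure M]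
    (A B : Set M) {n : ℕ} (c c' : Fin n → M) : Prop :=
  ∀ (k : ℕ) (ψ : L.Formula (Fin n ⊕ Fin k)),
    ∃ (l : ℕ) (Θ : L.Formula (Fin k ⊕ Fin l)) (e : Fin l → M),
      (∀ i, e i ∈ A) ∧ Defines ψ Θ e c A ∧ Defines ψ Θ e c' B

/-- `c` and `d` (families indexed by `ι`) realize the same type over `A`. -/
def SameTypeOver (L : FirstOrder.Language.{u, u}) {M : Type u} [L.Structure M]
    (A : Set M) {ι : Type*} (c d : ι → M) : Prop :=
  ∀ (n k : ℕ) (φ : L.Formula (Fin n ⊕ Fin k)) (s : Fin n → ι) (a : Fin k → M),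
    (∀ i, a i ∈ A) →
    (φ.Realize (Sum.elim (c ∘ s) a) ↔ φ.Realize (Sum.elim (d ∘ s) a))

/-- `f` is a partial elementary map with domain `D`. -/
def IsElemMap (L : FirstOrder.Language.{u, u}) {M : Type u} [L.Structure M]
    (D : Set M) (f : D → M) : Prop :=
  ∀ (n : ℕ) (φ : L.Formula (Fin n)) (d : Fin n → D),
    φ.Realize (fun i => (d i : M)) ↔ φ.Realize (fun i => f (d i))

/-- A set `Δ₁` of formulas `ψ(x̄, ȳ)` with `x̄` of length `n`. -/
abbrev Delta1 (L : FirstOrder.Language.{u, u}) (n : ℕ) :=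
  Set (Σ k : ℕ, L.Formula (Fin n ⊕ Fin k))


open FirstOrder.Language

section Aux

variable {L : FirstOrder.Language.{u, u}} {M : Type u} [L.Structure M] [L.IsRelational]

/-- Relativization of all quantifiers of a bounded formula to the predicate `P`. -/
def relativize (P : L.Relations 1) {α : Type*} :
    ∀ {k : ℕ}, L.BoundedFormula α k → L.BoundedFormula α k
  | _, BoundedFormula.falsum => BoundedFormula.falsum
  | _, BoundedFormula.equal t₁ t₂ => BoundedFormula.equal t₁ t₂
  | _, BoundedFormula.rel R ts => BoundedFormula.rel R ts
  | _, BoundedFormula.imp f g => (relativize P f).imp (relativize P g)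
  | k, BoundedFormula.all f =>
      ((BoundedFormula.rel P ![Term.var (Sum.inr (Fin.last k))]).imp (relativize P f)).all

lemma term_realize_coe (B : Set M) {β : Type*} (t : L.Term β) (v : β → B) :
    ((@Term.realize L B (setStructure L B) β v t : B) : M) = t.realize (fun i => (v i : M)) := by
  cases t with
  | var i => rfl
  | func f ts => exact isEmptyElim f

lemma coe_elim {β γ : Type*} (B : Set M) (v : β → B) (xs : γ → B) :
    (fun i => ((Sum.elim v xs i : B) : M)) = Sum.elim (fun i => (v i : M)) (fun i => (xs i : M)) := by
  funext i; cases i <;> rfl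

theorem realize_relativize (P : L.Relations 1) {α : Type*} {k : ℕ}
    (φ : L.BoundedFormula α k) :
    ∀ (v : α → (Pset P : Set M)) (xs : Fin k → (Pset P : Set M)),
      ((relativize P φ).Realize (fun i => (v i : M)) (fun i => (xs i : M)) ↔
        @BoundedFormula.Realize L _ (setStructure L (Pset P)) α k φ v xs) := by
  induction φ with
  | falsum => intro v xs; exact Iff.rfl
  | equal t₁ t₂ =>
      intro v xs
      show (t₁.realize _ = t₂.realize _) ↔
        (@Term.realize L (Pset P) (setStructure L (Pset P)) _ (Sum.elim v xs) t₁ =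
          @Term.realize L (Pset P) (setStructure L (Pset P)) _ (Sum.elim v xs) t₂)
      rw [← coe_elim (Pset P) v xs, ← term_realize_coe (Pset P) t₁, ← term_realize_coe (Pset P) t₂]
      exact ⟨fun h => Subtype.ext h, fun h => congrArg _ h⟩
  | rel R ts =>
      intro v xs
      show Structure.RelMap R _ ↔ Structure.RelMap R
        (fun i => (@Term.realize L (Pset P) (setStructure L (Pset P)) _ (Sum.elim v xs) (ts i) : M))
      have e : (fun i => Term.realize (Sum.elim (fun i => ((v i : M))) (fun i => ((xs i : M)))) (ts i))
          = fun i => ((@Term.realize L (Pset P) (setStructure L (Pset P)) _ (Sum.elim v xs) (ts i) : M)) := by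
        funext i
        rw [term_realize_coe (Pset P) (ts i), coe_elim]
      rw [e]
  | imp f g ihf ihg =>
      intro v xs
      exact imp_congr (ihf v xs) (ihg v xs)
  | @all n f ih =>
      intro v xs
      have e : ∀ x : (Pset P : Set M),
          (fun i => ((Fin.snoc xs x : Fin _ → (Pset P : Set M)) i : M)) = Fin.snoc (fun i => (xs i : M)) (x : M) := by
        intro x; funext i
        refine Fin.lastCases ?_ (fun j => ?_) i <;> simp
      have e2 : ∀ x : M,
          (fun j => Term.realize (Sum.elim (fun i => ((v i : M)))
            (Fin.snoc (fun i => ((xs i : M))) x))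
            (![(Term.var (Sum.inr (Fin.last n)) : L.Term (α ⊕ Fin (n+1)))] j)) = ![x] := by
        intro x; funext j; fin_cases j; simp
      constructor
      · intro h x
        have hx : (BoundedFormula.rel P ![(Term.var (Sum.inr (Fin.last n)) : L.Term (α ⊕ Fin (n+1)))]).Realize
              (fun i => ((v i : M))) (Fin.snoc (fun i => ((xs i : M))) (x : M)) →
            (relativize P f).Realize (fun i => ((v i : M)))
              (Fin.snoc (fun i => ((xs i : M))) (x : M)) := h (x : M)
        have hrel : (BoundedFormula.rel P ![(Term.var (Sum.inr (Fin.last n)) : L.Term (α ⊕ Fin (n+1)))]).Realize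
            (fun i => ((v i : M))) (Fin.snoc (fun i => ((xs i : M))) (x : M)) := by
          show Structure.RelMap P _
          rw [e2]
          exact x.2
        have h2 := hx hrel
        rw [← e x] at h2
        exact (ih v (Fin.snoc xs x)).mp h2
      · intro h x hx
        have hxP : x ∈ Pset P := by
          have hx' : Structure.RelMap P _ := hx
          rw [e2] at hx'
          exact hx'
        have h2 := (ih v (Fin.snoc xs ⟨x, hxP⟩)).mpr (h ⟨x, hxP⟩)
        rw [e ⟨x, hxP⟩] at h2
        exact h2

lemma realizeIn_iff (P : L.Relations 1) {β : Type} (θ : L.Formula β) (v : β → (Pset P : Set M)) :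
    RealizeIn (Pset P) θ v ↔
      BoundedFormula.Realize (relativize P (θ : L.BoundedFormula β 0))
        (fun i => (v i : M)) (default : Fin 0 → M) := by
  have hx : (fun i : Fin 0 => (((default : Fin 0 → (Pset P : Set M)) i : M))) = (default : Fin 0 → M) :=
    funext fun i => i.elim0
  rw [← hx, realize_relativize P θ v default]
  exact Iff.rfl

lemma realize_Patom (P : L.Relations 1) {β : Type*} (j : β) (v : β → M) :
    Formula.Realize (L := L) (BoundedFormula.rel P ![Term.var (Sum.inl j)]) v ↔ inP P (v j) := by
  have e : (fun i => Term.realize (Sum.elim v (default : Fin 0 → M))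
      ((![Term.var (Sum.inl j)] : Fin 1 → L.Term (β ⊕ Fin 0)) i)) = ![v j] := by
    funext i; fin_cases i; rfl
  show Structure.RelMap P _ ↔ _
  rw [e]
  exact Iff.rfl

end Aux


/-- a complete type over a complete set `A` containing `P(z̄)` is
equivalent to its restriction to `A ∩ P`. -/
theorem statement_4 {L : FirstOrder.Language.{u, u}} {M : Type u} [L.Structure M]
    [L.IsRelational] (P : L.Relations 1) (hQE : HypQE L M) (h1 : Hyp1 (M := M) P)
    (A : Set M) (hA : IsComplete P A) (n : ℕ) (c : Fin n → M)
    (hc : ∀ i, inP P (c i)) :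
    ∀ d : Fin n → M,
      ((∀ ι ∈ typeOver (L := L) (A ∩ Pset P) c, ι.RealizedBy d) ↔
        (∀ ι ∈ typeOver (L := L) A c, ι.RealizedBy d)) := by
  intro d
  constructor
  · intro h ι hι
    have hdP : ∀ i, inP P (d i) := by
      intro i
      have hi := h ⟨0, BoundedFormula.rel P ![Term.var (Sum.inl (Sum.inl i))], Fin.elim0⟩
        ⟨fun j => j.elim0, (realize_Patom P (Sum.inl i) (Sum.elim c Fin.elim0)).mpr (hc i)⟩
      exact (realize_Patom P (Sum.inl i) (Sum.elim d Fin.elim0)).mp hi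
    obtain ⟨k, ψ, b⟩ := ι
    obtain ⟨hover, hreal⟩ := hι
    obtain ⟨θ, hθ⟩ := h1.1 n k ψ b
    have h1c : RealizeIn (Pset P) θ (fun i => (⟨c i, hc i⟩ : (Pset P : Set M))) :=
      (hθ (fun i => ⟨c i, hc i⟩)).mp hreal
    have hcr : BoundedFormula.Realize (relativize P (θ : L.BoundedFormula (Fin n) 0))
        c (default : Fin 0 → M) :=
      (realizeIn_iff P θ (fun i => ⟨c i, hc i⟩)).mp h1c
    have hd := h ⟨0, Formula.relabel Sum.inl (relativize P (θ : L.BoundedFormula (Fin n) 0)), Fin.elim0⟩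
      ⟨fun j => j.elim0, by
        show Formula.Realize _ _
        rw [Formula.realize_relabel]
        exact hcr⟩
    have hdr : BoundedFormula.Realize (relativize P (θ : L.BoundedFormula (Fin n) 0))
        d (default : Fin 0 → M) := by
      have := hd
      unfold Inst.RealizedBy at this
      rw [Formula.realize_relabel] at this
      exact this
    have h1d : RealizeIn (Pset P) θ (fun i => (⟨d i, hdP i⟩ : (Pset P : Set M))) :=
      (realizeIn_iff P θ (fun i => ⟨d i, hdP i⟩)).mpr hdr
    exact (hθ (fun i => ⟨d i, hdP i⟩)).mpr h1d
  · intro h ι hι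
    exact h ι ⟨fun i => (hι.1 i).1, hι.2⟩

end OverP
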